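/- arXiv:2204.08635 — 2 statements merged into one kernel-verified Lean document; each statement's English description precedes it below -/
import Mathlib

section
/- Let n ≥ 1, α, t, p ∈ (0,∞), r ∈ (1,∞) and q ∈ [1,∞). There are constants C₁, C₂ > 0, independent of f, such that: if f : ℝⁿ → ℂ is measurable with ‖f‖_{(KE^{α,p}_{q,r})_t} < ∞, then there exist nonnegative reals (λ_k)_{k≥0} and measurable functions (b_k)_{k≥0} with supp(b_k) ⊆ B_k and ‖b_k‖_{(E_r^q)_t} ≤ C₁·2^{-kα} for every k ≥ 0 (dyadic central (α,q,r)-blocks of restrict type), such that f = ∑_{k=0}^{∞} λ_k b_k almost everywhere and ∑_{k=0}^{∞} λ_k^p ≤ C₂ ‖f‖_{(KE^{α,p}_{q,r})_t}^p. -/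
open MeasureTheory Metric Set ENNReal
open scoped NNReal

noncomputable section

abbrev En (n : ℕ) : Type := EuclideanSpace ℝ (Fin n)

/-- Slice norm `‖f‖_{(E_r^q)_t}` for `ℝ≥0∞`-valued functions. -/
def sliceNorm (n : ℕ) (t r : ℝ) (q : ℝ≥0∞) (g : En n → ℝ≥0∞) : ℝ≥0∞ :=
  if q = ∞ then
    essSup (fun x => ((volume (ball x t))⁻¹ * ∫⁻ y in ball x t, g y ^ r) ^ (1 / r)) volume
  else
    (∫⁻ x, (((volume (ball x t))⁻¹ * ∫⁻ y in ball x t, g y ^ r) ^ (1 / r)) ^ q.toReal) ^ (1 / q.toReal)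

/-- Slice norm of a complex-valued function. -/
def sliceNormC (n : ℕ) (t r : ℝ) (q : ℝ≥0∞) (f : En n → ℂ) : ℝ≥0∞ :=
  sliceNorm n t r q fun y => (‖f y‖₊ : ℝ≥0∞)

/-- The ball `B_k = {x : |x| ≤ 2^k}`. -/
def ballZ (n : ℕ) (k : ℤ) : Set (En n) := closedBall 0 ((2 : ℝ) ^ k)

/-- The shell `S_k = B_k \ B_{k-1}`. -/
def shell (n : ℕ) (k : ℤ) : Set (En n) := ballZ n k \ ballZ n (k - 1)

/-- Homogeneous Herz-slice norm of an `ℝ≥0∞`-valued function. -/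
def herzHom (n : ℕ) (t r : ℝ) (q : ℝ≥0∞) (α : ℝ) (p : ℝ≥0∞) (g : En n → ℝ≥0∞) : ℝ≥0∞ :=
  if p = ∞ then
    ⨆ k : ℤ, (2 : ℝ≥0∞) ^ ((k : ℝ) * α) * sliceNorm n t r q ((shell n k).indicator g)
  else
    (∑' k : ℤ, ((2 : ℝ≥0∞) ^ ((k : ℝ) * α) * sliceNorm n t r q ((shell n k).indicator g)) ^ p.toReal) ^ (1 / p.toReal)

/-- Homogeneous Herz-slice norm of a complex-valued function. -/
def herzHomC (n : ℕ) (t r : ℝ) (q : ℝ≥0∞) (α : ℝ) (p : ℝ≥0∞) (f : En n → ℂ) : ℝ≥0∞ :=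
  herzHom n t r q α p fun y => (‖f y‖₊ : ℝ≥0∞)

/-- The `k`-th piece in the non-homogeneous decomposition: `B_0` for `k = 0`, `S_k` for `k ≥ 1`. -/
def pieceN (n : ℕ) (k : ℕ) : Set (En n) := if k = 0 then ballZ n 0 else shell n k

/-- Non-homogeneous Herz-slice norm of an `ℝ≥0∞`-valued function. -/
def herzNonHom (n : ℕ) (t r : ℝ) (q : ℝ≥0∞) (α : ℝ) (p : ℝ≥0∞) (g : En n → ℝ≥0∞) : ℝ≥0∞ :=
  if p = ∞ then
    ⨆ k : ℕ, (2 : ℝ≥0∞) ^ ((k : ℝ) * α) * sliceNorm n t r q ((pieceN n k).indicator g)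
  else
    (∑' k : ℕ, ((2 : ℝ≥0∞) ^ ((k : ℝ) * α) * sliceNorm n t r q ((pieceN n k).indicator g)) ^ p.toReal) ^ (1 / p.toReal)

/-- Non-homogeneous Herz-slice norm of a complex-valued function. -/
def herzNonHomC (n : ℕ) (t r : ℝ) (q : ℝ≥0∞) (α : ℝ) (p : ℝ≥0∞) (f : En n → ℂ) : ℝ≥0∞ :=
  herzNonHom n t r q α p fun y => (‖f y‖₊ : ℝ≥0∞)

/-- Hardy–Littlewood maximal operator. -/
def maximal (n : ℕ) (f : En n → ℂ) (x : En n) : ℝ≥0∞ :=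
  ⨆ (ρ : ℝ) (_ : 0 < ρ), (volume (ball x ρ))⁻¹ * ∫⁻ y in ball x ρ, (‖f y‖₊ : ℝ≥0∞)

/-!
Take `λ_k = 2^{kα} ‖f 1_{P_k}‖_{(E_r^q)_t}`, where `P_0 = B_0` and `P_k = S_k` for `k ≥ 1`, and
`b_k = λ_k⁻¹ f 1_{P_k}`. Then `‖b_k‖_{(E_r^q)_t} ≤ 2^{-kα}` by homogeneity of the slice norm, and
`∑ λ_k^p` is exactly `‖f‖^p` of the Herz-slice space, so `C₁ = C₂ = 1`. Since the `P_k`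
partition `ℝⁿ`, `f = ∑ λ_k b_k` off the pieces with `λ_k = 0`; on those `f` vanishes a.e.,
because the slice norm is definite: by Fubini, `∫ (∫_{B(x,t)} |g|^r) dx = |B(0,t)| ∫ |g|^r`.
-/

lemma ENNReal.rpow_mul_rpow_one_div {s : ℝ} (hs : 0 < s) (c x : ℝ≥0∞) :
    (c ^ s * x) ^ (1 / s) = c * x ^ (1 / s) := by
  rw [ENNReal.mul_rpow_of_nonneg _ _ (by positivity), ← ENNReal.rpow_mul,
    mul_one_div_cancel hs.ne', ENNReal.rpow_one]

lemma ENNReal.coe_inv_toNNReal_mul_le {a : ℝ≥0∞} (ha : a ≠ 0) (b : ℝ≥0∞) :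
    (((a * b).toNNReal)⁻¹ : ℝ≥0) * b ≤ a⁻¹ := by
  by_cases h : (a * b).toNNReal = 0
  · simp [h]
  obtain ⟨hab₀, habtop⟩ := not_or.1 ((ENNReal.toNNReal_eq_zero_iff _).not.1 h)
  have hb₀ : b ≠ 0 := right_ne_zero_of_mul hab₀
  have hbtop : b ≠ ∞ := fun hb => habtop (by rw [hb, ENNReal.mul_top ha])
  rw [ENNReal.coe_inv h, ENNReal.coe_toNNReal habtop, ENNReal.mul_inv (Or.inl ha) (Or.inr hb₀),
    mul_assoc, ENNReal.inv_mul_cancel hb₀ hbtop, mul_one]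

section BallIntegrals

variable {X : Type*} [PseudoMetricSpace X] [MeasurableSpace X] [OpensMeasurableSpace X]
  (μ : Measure X) {H : X → ℝ≥0∞} (t : ℝ)

-- `(x, y)` lies in this set iff `y ∈ ball x t`, and its slice `Prod.mk y ⁻¹' _` is `ball y t`,
-- both definitionally.
lemma setLIntegral_ball_eq_lintegral_indicator (x : X) :
    ∫⁻ y in ball x t, H y ∂μ =
      ∫⁻ y, {p : X × X | dist p.2 p.1 < t}.indicator (fun p => H p.2) (x, y) ∂μ := by
  rw [← lintegral_indicator measurableSet_ball]
  rfl

variable [SecondCountableTopology X] [SFinite μ]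

lemma measurable_indicator_dist_swap_lt (hH : Measurable H) :
    Measurable ({p : X × X | dist p.2 p.1 < t}.indicator fun p => H p.2) :=
  (hH.comp measurable_snd).indicator
    (isOpen_lt (continuous_snd.dist continuous_fst) continuous_const).measurableSet

lemma measurable_measure_ball : Measurable fun y => μ (ball y t) :=
  measurable_measure_prodMk_left
    (isOpen_lt (continuous_snd.dist continuous_fst) continuous_const).measurableSet

lemma Measurable.setLIntegral_ball (hH : Measurable H) :
    Measurable fun x => ∫⁻ y in ball x t, H y ∂μ := by
  simp_rw [setLIntegral_ball_eq_lintegral_indicator]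
  exact (measurable_indicator_dist_swap_lt t hH).lintegral_prod_right'

lemma lintegral_setLIntegral_ball (hH : Measurable H) :
    ∫⁻ x, ∫⁻ y in ball x t, H y ∂μ ∂μ = ∫⁻ y, H y * μ (ball y t) ∂μ := by
  simp_rw [setLIntegral_ball_eq_lintegral_indicator]
  rw [lintegral_lintegral_swap
    (f := fun x y => {p : X × X | dist p.2 p.1 < t}.indicator (fun p => H p.2) (x, y))
    (measurable_indicator_dist_swap_lt t hH).aemeasurable]
  refine lintegral_congr fun y => ?_
  rw [← lintegral_indicator_const measurableSet_ball]
  congr 1 with x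
  simp only [indicator_apply, mem_ofPred_eq, dist_comm y x]
  rfl

lemma ae_eq_zero_of_ae_setLIntegral_ball_eq_zero [μ.IsOpenPosMeasure] {t : ℝ} (ht : 0 < t)
    (hH : Measurable H) (h0 : ∀ᵐ x ∂μ, ∫⁻ y in ball x t, H y ∂μ = 0) : H =ᵐ[μ] 0 := by
  have hint : ∫⁻ y, H y * μ (ball y t) ∂μ = 0 := by
    rw [← lintegral_setLIntegral_ball μ t hH, lintegral_congr_ae h0, lintegral_zero]
  filter_upwards [(lintegral_eq_zero_iff (hH.mul (measurable_measure_ball μ t))).1 hint]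
    with y hy
  exact (mul_eq_zero.1 hy).resolve_right (measure_ball_pos μ y ht).ne'

end BallIntegrals

section SliceNorm

variable {n : ℕ} {t r : ℝ} {q : ℝ≥0∞}

lemma sliceNorm_const_mul (hr : 0 < r) (hq₀ : q ≠ 0) (hq : q ≠ ∞) (c : ℝ≥0)
    (g : En n → ℝ≥0∞) :
    sliceNorm n t r q (fun y => c * g y) = c * sliceNorm n t r q g := by
  have hqt : 0 < q.toReal := ENNReal.toReal_pos hq₀ hq
  have hball : ∀ x : En n, ∫⁻ y in ball x t, (c * g y) ^ r = c ^ r * ∫⁻ y in ball x t, g y ^ r :=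
    fun x => by
      simp_rw [ENNReal.mul_rpow_of_nonneg _ _ hr.le]
      exact lintegral_const_mul' _ _ (ENNReal.rpow_lt_top_of_nonneg hr.le coe_ne_top).ne
  simp only [sliceNorm, if_neg hq, hball, mul_left_comm _ ((c : ℝ≥0∞) ^ r),
    ENNReal.rpow_mul_rpow_one_div hr, ENNReal.mul_rpow_of_nonneg _ _ hqt.le]
  rw [lintegral_const_mul' _ _ (ENNReal.rpow_lt_top_of_nonneg hqt.le coe_ne_top).ne,
    ENNReal.rpow_mul_rpow_one_div hqt]

lemma sliceNormC_const_mul (hr : 0 < r) (hq₀ : q ≠ 0) (hq : q ≠ ∞) (c : ℂ) (f : En n → ℂ) :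
    sliceNormC n t r q (fun y => c * f y) = ‖c‖₊ * sliceNormC n t r q f := by
  simp only [sliceNormC, nnnorm_mul, ENNReal.coe_mul]
  exact sliceNorm_const_mul hr hq₀ hq _ _

lemma sliceNormC_indicator (s : Set (En n)) (f : En n → ℂ) :
    sliceNormC n t r q (s.indicator f) = sliceNorm n t r q (s.indicator fun y => ‖f y‖₊) := by
  simp only [sliceNormC, nnnorm_indicator_eq_indicator_nnnorm, ENNReal.coe_indicator]

lemma ae_eq_zero_of_sliceNorm_eq_zero (ht : 0 < t) (hr : 0 < r) (hq₀ : q ≠ 0) (hq : q ≠ ∞)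
    {g : En n → ℝ≥0∞} (hg : Measurable g) (h0 : sliceNorm n t r q g = 0) : g =ᵐ[volume] 0 := by
  have hqt : 0 < q.toReal := ENNReal.toReal_pos hq₀ hq
  have hgr : Measurable fun y => g y ^ r := hg.pow_const r
  rw [sliceNorm, if_neg hq, ENNReal.rpow_eq_zero_iff_of_pos (by positivity)] at h0
  have hmeas : Measurable fun x : En n =>
      (((volume (ball x t))⁻¹ * ∫⁻ y in ball x t, g y ^ r) ^ (1 / r)) ^ q.toReal :=
    (((measurable_measure_ball volume t).inv.mul (hgr.setLIntegral_ball volume t)).pow_const _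
      ).pow_const _
  rw [lintegral_eq_zero_iff hmeas] at h0
  have hball : ∀ᵐ x ∂(volume : Measure (En n)), ∫⁻ y in ball x t, g y ^ r = 0 := by
    filter_upwards [h0] with x hx
    simpa only [Pi.zero_apply, ENNReal.rpow_eq_zero_iff_of_pos hqt,
      ENNReal.rpow_eq_zero_iff_of_pos (one_div_pos.2 hr), mul_eq_zero, ENNReal.inv_eq_zero,
      measure_ball_lt_top.ne, false_or] using hx
  filter_upwards [ae_eq_zero_of_ae_setLIntegral_ball_eq_zero volume ht hgr hball] with y hy
  exact (ENNReal.rpow_eq_zero_iff_of_pos hr).1 hy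

end SliceNorm

section Pieces

variable {n : ℕ}

lemma measurableSet_pieceN (k : ℕ) : MeasurableSet (pieceN n k) := by
  unfold pieceN shell ballZ
  split_ifs
  · exact measurableSet_closedBall
  · exact measurableSet_closedBall.diff measurableSet_closedBall

lemma pieceN_subset_ballZ (k : ℕ) : pieceN n k ⊆ ballZ n k := by
  unfold pieceN shell
  split_ifs with hk
  · simp [hk]
  · exact sdiff_subset

lemma pieceN_of_ne_zero {k : ℕ} (hk : k ≠ 0) : pieceN n k = shell n k := if_neg hk

lemma ballZ_mono {j k : ℤ} (hjk : j ≤ k) : ballZ n j ⊆ ballZ n k :=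
  closedBall_subset_closedBall (zpow_le_zpow_right₀ one_le_two hjk)

lemma pairwise_disjoint_pieceN : Pairwise (Function.onFun Disjoint (pieceN n)) := by
  refine (pairwise_disjoint_on _).2 fun j k hjk => ?_
  rw [pieceN_of_ne_zero (by omega : k ≠ 0), shell]
  exact disjoint_sdiff_right.mono_left
    ((pieceN_subset_ballZ j).trans (ballZ_mono (by omega)))

lemma exists_mem_pieceN (x : En n) : ∃ k, x ∈ pieceN n k := by
  classical
  have hex : ∃ k : ℕ, x ∈ ballZ n k := by
    obtain ⟨k, hk⟩ := pow_unbounded_of_one_lt ‖x‖ one_lt_two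
    exact ⟨k, by simpa [ballZ] using hk.le⟩
  refine ⟨Nat.find hex, ?_⟩
  rcases Nat.eq_zero_or_pos (Nat.find hex) with h | h
  · simpa [pieceN, h] using Nat.find_spec hex
  · rw [pieceN_of_ne_zero h.ne', shell]
    refine ⟨Nat.find_spec hex, fun hx => Nat.find_min hex (Nat.sub_lt h one_pos) ?_⟩
    rwa [Nat.cast_pred h]

lemma tsum_indicator_pieceN {M : Type*} [AddCommMonoid M] [TopologicalSpace M]
    (f : En n → M) (x : En n) : ∑' k, (pieceN n k).indicator f x = f x := by
  obtain ⟨k, hk⟩ := exists_mem_pieceN x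
  rw [tsum_eq_single k fun j hj =>
    indicator_of_notMem ((pairwise_disjoint_pieceN hj).notMem_of_mem_right hk) f,
    indicator_of_mem hk]

end Pieces

section Blocks

variable {n : ℕ} {t r : ℝ} {q : ℝ≥0∞} {α : ℝ} {p : ℝ≥0∞} {f : En n → ℂ}

def weightedPieceNorm (n : ℕ) (t r : ℝ) (q : ℝ≥0∞) (α : ℝ) (f : En n → ℂ) (k : ℕ) : ℝ≥0∞ :=
  (2 : ℝ≥0∞) ^ ((k : ℝ) * α) * sliceNormC n t r q ((pieceN n k).indicator f)

-- Since `0⁻¹ = 0` in `ℂ`, the block vanishes where its coefficient does.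
def herzBlock (n : ℕ) (t r : ℝ) (q : ℝ≥0∞) (α : ℝ) (f : En n → ℂ) (k : ℕ) (x : En n) : ℂ :=
  (((weightedPieceNorm n t r q α f k).toNNReal : ℝ) : ℂ)⁻¹ * (pieceN n k).indicator f x

lemma herzNonHomC_rpow_eq_tsum (hp₀ : p ≠ 0) (hp : p ≠ ∞) :
    herzNonHomC n t r q α p f ^ p.toReal = ∑' k, weightedPieceNorm n t r q α f k ^ p.toReal := by
  rw [herzNonHomC, herzNonHom, if_neg hp, ← ENNReal.rpow_mul, one_div,
    inv_mul_cancel₀ (ENNReal.toReal_pos hp₀ hp).ne', ENNReal.rpow_one]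
  simp only [weightedPieceNorm, sliceNormC_indicator]

lemma weightedPieceNorm_ne_top (hp₀ : p ≠ 0) (hp : p ≠ ∞) (hfin : herzNonHomC n t r q α p f < ∞)
    (k : ℕ) : weightedPieceNorm n t r q α f k ≠ ∞ := by
  have hpt : 0 < p.toReal := ENNReal.toReal_pos hp₀ hp
  have hsum : ∑' j, weightedPieceNorm n t r q α f j ^ p.toReal < ∞ := by
    rw [← herzNonHomC_rpow_eq_tsum hp₀ hp]
    exact ENNReal.rpow_lt_top_of_nonneg hpt.le hfin.ne
  exact ((ENNReal.rpow_lt_top_iff_of_pos hpt).1 ((ENNReal.le_tsum k).trans_lt hsum)).ne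

lemma measurable_herzBlock (hf : Measurable f) (k : ℕ) :
    Measurable (herzBlock n t r q α f k) :=
  (hf.indicator (measurableSet_pieceN k)).const_mul _

lemma support_herzBlock_subset (k : ℕ) :
    Function.support (herzBlock n t r q α f k) ⊆ ballZ n k :=
  (Function.support_mul_subset_right _ _).trans
    (support_indicator_subset.trans (pieceN_subset_ballZ k))

lemma sliceNormC_herzBlock_le (hr : 0 < r) (hq₀ : q ≠ 0) (hq : q ≠ ∞) (k : ℕ) :
    sliceNormC n t r q (herzBlock n t r q α f k) ≤ (2 : ℝ≥0∞) ^ (-(k : ℝ) * α) := by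
  unfold herzBlock
  rw [sliceNormC_const_mul hr hq₀ hq, nnnorm_inv, Complex.nnnorm_real, NNReal.nnnorm_eq,
    neg_mul, ENNReal.rpow_neg]
  exact ENNReal.coe_inv_toNNReal_mul_le (ENNReal.rpow_pos two_pos ofNat_ne_top).ne' _

lemma ae_toNNReal_mul_herzBlock (ht : 0 < t) (hr : 0 < r) (hq₀ : q ≠ 0) (hq : q ≠ ∞)
    (hp₀ : p ≠ 0) (hp : p ≠ ∞) (hf : Measurable f) (hfin : herzNonHomC n t r q α p f < ∞) :
    ∀ᵐ x ∂(volume : Measure (En n)), ∀ k,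
      (((weightedPieceNorm n t r q α f k).toNNReal : ℝ) : ℂ) * herzBlock n t r q α f k x =
        (pieceN n k).indicator f x := by
  refine ae_all_iff.2 fun k => ?_
  by_cases hk : (weightedPieceNorm n t r q α f k).toNNReal = 0
  · have hnorm : sliceNormC n t r q ((pieceN n k).indicator f) = 0 :=
      (mul_eq_zero.1 (((ENNReal.toNNReal_eq_zero_iff _).1 hk).resolve_right
        (weightedPieceNorm_ne_top hp₀ hp hfin k))).resolve_left
        (ENNReal.rpow_pos two_pos ofNat_ne_top).ne'
    filter_upwards [ae_eq_zero_of_sliceNorm_eq_zero ht hr hq₀ hq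
      (hf.indicator (measurableSet_pieceN k)).nnnorm.coe_nnreal_ennreal hnorm] with x hx
    have hfx : (pieceN n k).indicator f x = 0 := by simpa using hx
    simp [herzBlock, hk, hfx]
  · filter_upwards with x
    rw [herzBlock, ← mul_assoc, mul_inv_cancel₀ (by exact_mod_cast hk), one_mul]

end Blocks

theorem nonHomHerzSlice_block_decomposition_general
    (n : ℕ) (α t r : ℝ) (ht : 0 < t) (hr : 1 < r)
    (p : ℝ≥0∞) (hp : 0 < p) (hp' : p ≠ ∞) (q : ℝ≥0∞) (hq : 1 ≤ q) (hq' : q ≠ ∞) :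
    ∃ C₁ C₂ : ℝ≥0, 0 < C₁ ∧ 0 < C₂ ∧
      ∀ f : En n → ℂ, Measurable f → herzNonHomC n t r q α p f < ∞ →
        ∃ (lam : ℕ → ℝ≥0) (b : ℕ → En n → ℂ),
          (∀ k, Measurable (b k)) ∧
          (∀ k, Function.support (b k) ⊆ ballZ n (k : ℤ)) ∧
          (∀ k : ℕ, sliceNormC n t r q (b k) ≤ (C₁ : ℝ≥0∞) * (2 : ℝ≥0∞) ^ (-(k : ℝ) * α)) ∧
          (∀ᵐ x ∂(volume : Measure (En n)), f x = ∑' k : ℕ, ((lam k : ℝ) : ℂ) * b k x) ∧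
          ∑' k : ℕ, ((lam k : ℝ≥0∞)) ^ p.toReal
            ≤ (C₂ : ℝ≥0∞) * herzNonHomC n t r q α p f ^ p.toReal := by
  have hr₀ : 0 < r := zero_lt_one.trans hr
  have hq₀ : q ≠ 0 := (zero_lt_one.trans_le hq).ne'
  refine ⟨1, 1, one_pos, one_pos, fun f hf hfin =>
    ⟨fun k => (weightedPieceNorm n t r q α f k).toNNReal, herzBlock n t r q α f,
      measurable_herzBlock hf, support_herzBlock_subset, fun k => ?_, ?_, ?_⟩⟩
  · rw [ENNReal.coe_one, one_mul]
    exact sliceNormC_herzBlock_le hr₀ hq₀ hq' k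
  · filter_upwards [ae_toNNReal_mul_herzBlock ht hr₀ hq₀ hq' hp.ne' hp' hf hfin] with x hx
    simp_rw [hx]
    exact (tsum_indicator_pieceN f x).symm
  · rw [ENNReal.coe_one, one_mul, herzNonHomC_rpow_eq_tsum hp.ne' hp']
    exact ENNReal.tsum_le_tsum fun k =>
      ENNReal.rpow_le_rpow coe_toNNReal_le_self ENNReal.toReal_nonneg

/-- block decomposition of the non-homogeneous Herz-slice space
(direct direction). -/
theorem nonHomHerzSlice_block_decomposition
    (n : ℕ) (hn : 1 ≤ n) (α t r : ℝ) (hα : 0 < α) (ht : 0 < t) (hr : 1 < r)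
    (p : ℝ≥0∞) (hp : 0 < p) (hp' : p ≠ ∞) (q : ℝ≥0∞) (hq : 1 ≤ q) (hq' : q ≠ ∞) :
    ∃ C₁ C₂ : ℝ≥0, 0 < C₁ ∧ 0 < C₂ ∧
      ∀ f : En n → ℂ, Measurable f → herzNonHomC n t r q α p f < ∞ →
        ∃ (lam : ℕ → ℝ≥0) (b : ℕ → En n → ℂ),
          (∀ k, Measurable (b k)) ∧
          (∀ k, Function.support (b k) ⊆ ballZ n (k : ℤ)) ∧
          (∀ k : ℕ, sliceNormC n t r q (b k) ≤ (C₁ : ℝ≥0∞) * (2 : ℝ≥0∞) ^ (-(k : ℝ) * α)) ∧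
          (∀ᵐ x ∂(volume : Measure (En n)), f x = ∑' k : ℕ, ((lam k : ℝ) : ℂ) * b k x) ∧
          ∑' k : ℕ, ((lam k : ℝ≥0∞)) ^ p.toReal
            ≤ (C₂ : ℝ≥0∞) * herzNonHomC n t r q α p f ^ p.toReal :=
  nonHomHerzSlice_block_decomposition_general n α t r ht hr p hp hp' q hq hq'
end
end

section
/- Let n ≥ 1, α, t, p ∈ (0,∞), r ∈ (1,∞) and q ∈ [1,∞). There is a constant C > 0, independent of the data, such that: whenever (λ_k)_{k≥0} are nonnegative reals with ∑_{k=0}^{∞} λ_k^p < ∞, (b_k)_{k≥0} are measurable functions with supp(b_k) ⊆ B_k and ‖b_k‖_{(E_r^q)_t} ≤ 2^{-kα} for every k ≥ 0, and f : ℝⁿ → ℂ satisfies f(x) = ∑_{k=0}^{∞} λ_k b_k(x) with the series converging absolutely for almost every x, then ‖f‖_{(KE^{α,p}_{q,r})_t}^p ≤ C ∑_{k=0}^{∞} λ_k^p; in particular f ∈ (KE^{α,p}_{q,r})_t(ℝⁿ). -/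
open MeasureTheory Metric Set ENNReal
open scoped NNReal

noncomputable section

/-!
On the piece `P_j` (`B_0` if `j = 0`, `S_j` otherwise) only the blocks `b_k` with `k ≥ j` live, so
`|f| 1_{P_j} ≤ ∑_m λ_{m+j} |b_{m+j}|` almost everywhere. The slice norm is an `L^q` norm of local
`L^r` means, hence countably subadditive (Minkowski twice, as `q, r ≥ 1`) and homogeneous, which
gives `2^{jα} ‖f 1_{P_j}‖ ≤ ∑_m 2^{-mα} λ_{m+j}`. The `ℓ^p` norm of such a geometrically weighted
tail sum of `λ` is controlled by that of `λ`: by Minkowski in `ℓ^p` if `p ≥ 1`, and by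
subadditivity of `s ↦ s^p` if `p ≤ 1`.
-/

theorem ENNReal.iSup_rpow {ι : Sort*} {p : ℝ} (hp : 0 < p) (g : ι → ℝ≥0∞) :
    (⨆ i, g i) ^ p = ⨆ i, g i ^ p :=
  (orderIsoRpow p hp).map_iSup g

theorem ENNReal.tsum_rpow_le_of_le_one {ι : Type*} {p : ℝ} (hp0 : 0 < p) (hp1 : p ≤ 1)
    (f : ι → ℝ≥0∞) : (∑' i, f i) ^ p ≤ ∑' i, f i ^ p := by
  rw [ENNReal.tsum_eq_iSup_sum, ENNReal.iSup_rpow hp0]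
  refine iSup_le fun s => (Finset.le_sum_of_subadditive (· ^ p) (zero_rpow_of_pos hp0).le
    (fun x y => rpow_add_le_add_rpow x y hp0.le hp1) s f).trans (ENNReal.sum_le_tsum s)

theorem ENNReal.tsum_nat_add_le (g : ℕ → ℝ≥0∞) (m : ℕ) : ∑' j, g (m + j) ≤ ∑' k, g k :=
  ENNReal.tsum_comp_le_tsum_of_injective (add_right_injective m) g

section LpNorm

variable {α : Type*} [MeasurableSpace α] {μ : Measure α} {q : ℝ}

theorem eLpNorm'_iSup_of_monotone {f : ℕ → α → ℝ≥0∞} (hf : ∀ N, AEMeasurable (f N) μ)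
    (hmono : Monotone f) (hq : 0 < q) :
    eLpNorm' (fun a => ⨆ N, f N a) q μ = ⨆ N, eLpNorm' (f N) q μ := by
  simp only [eLpNorm'_eq_lintegral_enorm, enorm_eq_self, ENNReal.iSup_rpow hq]
  rw [lintegral_iSup' (fun N => (hf N).pow_const q)
    (ae_of_all _ fun a _ _ h => rpow_le_rpow (hmono h a) hq.le), ENNReal.iSup_rpow (by positivity)]

theorem eLpNorm'_tsum_le {f : ℕ → α → ℝ≥0∞} (hf : ∀ k, AEMeasurable (f k) μ) (hq : 1 ≤ q) :
    eLpNorm' (fun a => ∑' k, f k a) q μ ≤ ∑' k, eLpNorm' (f k) q μ := by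
  have hsum (N : ℕ) : AEMeasurable (fun a => ∑ k ∈ Finset.range N, f k a) μ :=
    Finset.aemeasurable_fun_sum _ fun k _ => hf k
  simp_rw [ENNReal.tsum_eq_iSup_nat]
  rw [eLpNorm'_iSup_of_monotone hsum (fun N M h a => Finset.sum_le_sum_of_subset
    (Finset.range_subset_range.2 h)) (by linarith)]
  refine iSup_le fun N => ?_
  rw [← Finset.sum_fn]
  exact (eLpNorm'_sum_le (fun k _ => (hf k).aestronglyMeasurable) hq).trans
    (le_iSup (fun N => ∑ k ∈ Finset.range N, eLpNorm' (f k) q μ) N)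

end LpNorm

section GeometricTail

variable {p : ℝ} (c : ℝ≥0∞) (v : ℕ → ℝ≥0∞)

theorem tsum_rpow_tsum_geometric_mul_le_of_one_le (hp : 1 ≤ p) :
    ∑' j, (∑' m, c ^ m * v (m + j)) ^ p ≤ ((1 - c)⁻¹) ^ p * ∑' k, v k ^ p := by
  have hp0 : 0 < p := by linarith
  set S := ∑' k, v k ^ p
  have hnorm (g : ℕ → ℝ≥0∞) : eLpNorm' g p Measure.count = (∑' j, g j ^ p) ^ (1 / p) := by
    simp only [eLpNorm'_eq_lintegral_enorm, enorm_eq_self, lintegral_count]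
  have hminkowski := eLpNorm'_tsum_le (μ := Measure.count)
    (f := fun m j => c ^ m * v (m + j)) (fun _ => .of_discrete) hp
  simp only [hnorm] at hminkowski
  have hshift (m : ℕ) : (∑' j, (c ^ m * v (m + j)) ^ p) ^ (1 / p) ≤ c ^ m * S ^ (1 / p) := by
    simp only [mul_rpow_of_nonneg _ _ hp0.le, ENNReal.tsum_mul_left]
    rw [mul_rpow_of_nonneg _ _ (by positivity), ← rpow_mul, mul_one_div_cancel hp0.ne', rpow_one]
    gcongr
    exact ENNReal.tsum_nat_add_le _ m
  calc ∑' j, (∑' m, c ^ m * v (m + j)) ^ p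
      = ((∑' j, (∑' m, c ^ m * v (m + j)) ^ p) ^ (1 / p)) ^ p := by
        rw [← rpow_mul, one_div_mul_cancel hp0.ne', rpow_one]
    _ ≤ (∑' m, c ^ m * S ^ (1 / p)) ^ p :=
        rpow_le_rpow (hminkowski.trans (ENNReal.tsum_le_tsum hshift)) hp0.le
    _ = ((1 - c)⁻¹) ^ p * S := by
        rw [ENNReal.tsum_mul_right, ENNReal.tsum_geometric, mul_rpow_of_nonneg _ _ hp0.le,
          ← rpow_mul, one_div_mul_cancel hp0.ne', rpow_one]

theorem tsum_rpow_tsum_geometric_mul_le_of_le_one (hp0 : 0 < p) (hp1 : p ≤ 1) :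
    ∑' j, (∑' m, c ^ m * v (m + j)) ^ p ≤ (1 - c ^ p)⁻¹ * ∑' k, v k ^ p :=
  calc ∑' j, (∑' m, c ^ m * v (m + j)) ^ p
      ≤ ∑' j, ∑' m, (c ^ p) ^ m * v (m + j) ^ p := by
        refine ENNReal.tsum_le_tsum fun j => (ENNReal.tsum_rpow_le_of_le_one hp0 hp1 _).trans ?_
        simp only [mul_rpow_of_nonneg _ _ hp0.le, ← rpow_natCast, ← rpow_mul, mul_comm p]
        rfl
    _ = ∑' m, (c ^ p) ^ m * ∑' j, v (m + j) ^ p := by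
        rw [ENNReal.tsum_comm]; simp only [ENNReal.tsum_mul_left]
    _ ≤ ∑' m, (c ^ p) ^ m * ∑' k, v k ^ p :=
        ENNReal.tsum_le_tsum fun m => mul_le_mul_right (ENNReal.tsum_nat_add_le _ m) _
    _ = (1 - c ^ p)⁻¹ * ∑' k, v k ^ p := by rw [ENNReal.tsum_mul_right, ENNReal.tsum_geometric]

end GeometricTail

theorem exists_tsum_rpow_tsum_geometric_mul_le {p : ℝ} (hp : 0 < p) {c : ℝ≥0∞} (hc : c < 1) :
    ∃ K : ℝ≥0, ∀ v : ℕ → ℝ≥0∞,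
      ∑' j, (∑' m, c ^ m * v (m + j)) ^ p ≤ K * ∑' k, v k ^ p := by
  rcases le_total 1 p with hp1 | hp1
  · have hK : ((1 - c)⁻¹) ^ p ≠ ∞ :=
      rpow_ne_top_of_nonneg hp.le (inv_ne_top.2 (tsub_pos_of_lt hc).ne')
    exact ⟨_, fun v => (coe_toNNReal hK).symm ▸
      tsum_rpow_tsum_geometric_mul_le_of_one_le c v hp1⟩
  · have hK : (1 - c ^ p)⁻¹ ≠ ∞ := inv_ne_top.2 (tsub_pos_of_lt (rpow_lt_one hc hp)).ne'
    exact ⟨_, fun v => (coe_toNNReal hK).symm ▸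
      tsum_rpow_tsum_geometric_mul_le_of_le_one c v hp hp1⟩

section BallMeans

variable {X : Type*} [PseudoMetricSpace X] [MeasurableSpace X] [OpensMeasurableSpace X]
  [SecondCountableTopology X] {μ : Measure X} [SFinite μ] {h : X → ℝ≥0∞}

theorem measurable_setLIntegral_ball (hh : Measurable h) (t : ℝ) :
    Measurable fun x => ∫⁻ y in ball x t, h y ∂μ := by
  have hset : MeasurableSet {z : X × X | dist z.2 z.1 < t} :=
    (isOpen_lt (continuous_snd.dist continuous_fst) continuous_const).measurableSet
  convert ((hh.comp measurable_snd).indicator hset).lintegral_prod_right' (ν := μ) using 2 with x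
  rw [← lintegral_indicator measurableSet_ball]
  rfl

theorem measurable_eLpNorm'_restrict_ball (hh : Measurable h) (t r : ℝ) :
    Measurable fun x => eLpNorm' h r ((μ (ball x t))⁻¹ • μ.restrict (ball x t)) := by
  simp only [eLpNorm'_eq_lintegral_enorm, enorm_eq_self, lintegral_smul_measure, smul_eq_mul]
  have hvol : Measurable fun x => μ (ball x t) := by
    simpa using measurable_setLIntegral_ball (μ := μ) measurable_one t
  exact (hvol.inv.mul (measurable_setLIntegral_ball (hh.pow_const r) t)).pow_const _

end BallMeans

section SliceNorm

variable {n : ℕ} {t r : ℝ} {q : ℝ≥0∞}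

theorem sliceNorm_eq_eLpNorm' (hq : q ≠ ∞) (g : En n → ℝ≥0∞) :
    sliceNorm n t r q g = eLpNorm' (fun x =>
      eLpNorm' g r ((volume (ball x t))⁻¹ • volume.restrict (ball x t))) q.toReal volume := by
  simp only [sliceNorm, if_neg hq, eLpNorm'_eq_lintegral_enorm, enorm_eq_self,
    lintegral_smul_measure, smul_eq_mul]

theorem sliceNorm_mono_ae (hq : q ≠ ∞) (hr : 0 ≤ r) {g h : En n → ℝ≥0∞}
    (hgh : g ≤ᵐ[volume] h) : sliceNorm n t r q g ≤ sliceNorm n t r q h := by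
  rw [sliceNorm_eq_eLpNorm' hq, sliceNorm_eq_eLpNorm' hq]
  refine eLpNorm'_mono_enorm_ae toReal_nonneg (ae_of_all _ fun x => ?_)
  simp only [enorm_eq_self]
  exact eLpNorm'_mono_enorm_ae hr (Measure.ae_smul_measure (ae_restrict_of_ae hgh) _)

theorem sliceNorm_const_mul_le (hq : q ≠ ∞) (hq₀ : q ≠ 0) (hr : 0 < r) (c : ℝ≥0)
    (g : En n → ℝ≥0∞) : sliceNorm n t r q (fun y => c * g y) ≤ c * sliceNorm n t r q g := by
  rw [sliceNorm_eq_eLpNorm' hq, sliceNorm_eq_eLpNorm' hq]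
  refine eLpNorm'_le_nnreal_smul_eLpNorm'_of_ae_le_mul' (ae_of_all _ fun x => ?_)
    (toReal_pos hq₀ hq)
  simpa only [enorm_eq_self, ENNReal.smul_def, smul_eq_mul] using
    eLpNorm'_le_nnreal_smul_eLpNorm'_of_ae_le_mul' (ae_of_all _ fun y => le_rfl) hr

theorem sliceNorm_tsum_le (hq₁ : 1 ≤ q) (hq : q ≠ ∞) (hr : 1 ≤ r) {g : ℕ → En n → ℝ≥0∞}
    (hg : ∀ k, Measurable (g k)) :
    sliceNorm n t r q (fun y => ∑' k, g k y) ≤ ∑' k, sliceNorm n t r q (g k) := by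
  simp only [sliceNorm_eq_eLpNorm' hq]
  refine (eLpNorm'_mono_enorm_ae toReal_nonneg (ae_of_all _ fun x => ?_)).trans
    (eLpNorm'_tsum_le (fun k => (measurable_eLpNorm'_restrict_ball (hg k) t r).aemeasurable) ?_)
  · simpa only [enorm_eq_self] using eLpNorm'_tsum_le (fun k => (hg k).aemeasurable) hr
  · exact (toReal_le_toReal one_ne_top hq).2 hq₁

end SliceNorm

section Herz

variable {n : ℕ} {t r : ℝ} {q : ℝ≥0∞}

theorem disjoint_pieceN_ballZ {j k : ℕ} (hkj : k < j) : Disjoint (pieceN n j) (ballZ n k) := by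
  rw [pieceN, if_neg (by omega), shell]
  refine disjoint_sdiff_left.mono_right (closedBall_subset_closedBall ?_)
  exact zpow_le_zpow_right₀ one_le_two (by omega)

theorem herzNonHom_rpow_eq {α : ℝ} {p : ℝ≥0∞} (hp₀ : p ≠ 0) (hp : p ≠ ∞) (g : En n → ℝ≥0∞) :
    herzNonHom n t r q α p g ^ p.toReal = ∑' k : ℕ,
      ((2 : ℝ≥0∞) ^ ((k : ℝ) * α) * sliceNorm n t r q ((pieceN n k).indicator g)) ^ p.toReal := by
  rw [herzNonHom, if_neg hp, one_div, rpow_inv_rpow (toReal_pos hp₀ hp).ne']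

variable {lam : ℕ → ℝ≥0} {b : ℕ → En n → ℂ} {g : En n → ℝ≥0∞}

theorem indicator_pieceN_le_tsum_nat_add (hsupp : ∀ k, Function.support (b k) ⊆ ballZ n k)
    {y : En n} (hy : g y ≤ ∑' k, lam k * ‖b k y‖ₑ) (j : ℕ) :
    (pieceN n j).indicator g y ≤ ∑' m, lam (m + j) * ‖b (m + j) y‖ₑ := by
  by_cases hyj : y ∈ pieceN n j
  · have hvanish : ∀ k ∈ Finset.range j, (lam k : ℝ≥0∞) * ‖b k y‖ₑ = 0 := fun k hk => by
      rw [Function.notMem_support.1 fun hyk => (disjoint_pieceN_ballZ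
        (Finset.mem_range.1 hk)).notMem_of_mem_left hyj (hsupp k hyk), enorm_zero, mul_zero]
    rw [indicator_of_mem hyj]
    rwa [← ENNReal.summable.sum_add_tsum_nat_add' (k := j), Finset.sum_eq_zero hvanish,
      zero_add] at hy
  · simp [indicator_of_notMem hyj]

theorem sliceNorm_indicator_pieceN_le (hq₁ : 1 ≤ q) (hq : q ≠ ∞) (hr : 1 ≤ r)
    (hb : ∀ k, Measurable (b k)) (hsupp : ∀ k, Function.support (b k) ⊆ ballZ n k)
    (hg : ∀ᵐ y, g y ≤ ∑' k, lam k * ‖b k y‖ₑ) (j : ℕ) :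
    sliceNorm n t r q ((pieceN n j).indicator g)
      ≤ ∑' m, lam (m + j) * sliceNormC n t r q (b (m + j)) :=
  calc sliceNorm n t r q ((pieceN n j).indicator g)
      ≤ sliceNorm n t r q (fun y => ∑' m, lam (m + j) * ‖b (m + j) y‖ₑ) :=
        sliceNorm_mono_ae hq (by linarith)
          (hg.mono fun y hy => indicator_pieceN_le_tsum_nat_add hsupp hy j)
    _ ≤ ∑' m, sliceNorm n t r q (fun y => lam (m + j) * ‖b (m + j) y‖ₑ) :=
        sliceNorm_tsum_le hq₁ hq hr fun m => (hb (m + j)).enorm.const_mul _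
    _ ≤ ∑' m, lam (m + j) * sliceNormC n t r q (b (m + j)) :=
        ENNReal.tsum_le_tsum fun m =>
          sliceNorm_const_mul_le hq (one_pos.trans_le hq₁).ne' (by linarith) _ _

theorem two_rpow_mul_sliceNorm_indicator_pieceN_le {α : ℝ} (hq₁ : 1 ≤ q) (hq : q ≠ ∞)
    (hr : 1 ≤ r) (hb : ∀ k, Measurable (b k)) (hsupp : ∀ k, Function.support (b k) ⊆ ballZ n k)
    (hbnorm : ∀ k : ℕ, sliceNormC n t r q (b k) ≤ (2 : ℝ≥0∞) ^ (-(k : ℝ) * α))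
    (hg : ∀ᵐ y, g y ≤ ∑' k, lam k * ‖b k y‖ₑ) (j : ℕ) :
    (2 : ℝ≥0∞) ^ ((j : ℝ) * α) * sliceNorm n t r q ((pieceN n j).indicator g)
      ≤ ∑' m, (2 ^ (-α)) ^ m * (lam (m + j) : ℝ≥0∞) :=
  calc _ ≤ 2 ^ ((j : ℝ) * α) * ∑' m, (lam (m + j) : ℝ≥0∞) * sliceNormC n t r q (b (m + j)) := by
        gcongr
        exact sliceNorm_indicator_pieceN_le hq₁ hq hr hb hsupp hg j
    _ ≤ 2 ^ ((j : ℝ) * α) * ∑' m, (lam (m + j) : ℝ≥0∞) * 2 ^ (-((m + j : ℕ) : ℝ) * α) := by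
        gcongr with m
        exact hbnorm (m + j)
    _ = ∑' m, (2 ^ (-α)) ^ m * (lam (m + j) : ℝ≥0∞) := by
        rw [← ENNReal.tsum_mul_left]
        refine tsum_congr fun m => ?_
        rw [mul_left_comm, ← rpow_add _ _ two_ne_zero ofNat_ne_top, ← rpow_natCast,
          ← rpow_mul, mul_comm]
        push_cast
        ring_nf

end Herz

theorem nonHomHerzSlice_block_synthesis_general
    (n : ℕ) (α t r : ℝ) (hα : 0 < α) (hr : 1 < r)
    (p : ℝ≥0∞) (hp : 0 < p) (hp' : p ≠ ∞) (q : ℝ≥0∞) (hq : 1 ≤ q) (hq' : q ≠ ∞) :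
    ∃ C : ℝ≥0, 0 < C ∧
      ∀ (lam : ℕ → ℝ≥0) (b : ℕ → En n → ℂ) (f : En n → ℂ),
        (∀ k, Measurable (b k)) →
        (∑' k : ℕ, ((lam k : ℝ≥0∞)) ^ p.toReal < ∞) →
        (∀ k, Function.support (b k) ⊆ ballZ n (k : ℤ)) →
        (∀ k : ℕ, sliceNormC n t r q (b k) ≤ (2 : ℝ≥0∞) ^ (-(k : ℝ) * α)) →
        (∀ᵐ x ∂(volume : Measure (En n)),
          Summable (fun k : ℕ => (lam k : ℝ) * ‖b k x‖) ∧
          f x = ∑' k : ℕ, ((lam k : ℝ) : ℂ) * b k x) →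
        herzNonHomC n t r q α p f ^ p.toReal
          ≤ (C : ℝ≥0∞) * ∑' k : ℕ, ((lam k : ℝ≥0∞)) ^ p.toReal := by
  obtain ⟨K, hK⟩ := exists_tsum_rpow_tsum_geometric_mul_le (toReal_pos hp.ne' hp')
    (rpow_lt_one_of_one_lt_of_neg one_lt_two (neg_neg_of_pos hα))
  refine ⟨K + 1, by positivity, fun lam b f hb _ hsupp hbnorm hae => ?_⟩
  have hf : ∀ᵐ y, ‖f y‖ₑ ≤ ∑' k, lam k * ‖b k y‖ₑ := hae.mono fun y hy => by
    simpa [hy.2, enorm_mul, enorm_eq_nnnorm] using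
      enorm_tsum_le_tsum_enorm (f := fun k => ((lam k : ℝ) : ℂ) * b k y)
  calc herzNonHomC n t r q α p f ^ p.toReal
      ≤ ∑' j, (∑' m, (2 ^ (-α)) ^ m * (lam (m + j) : ℝ≥0∞)) ^ p.toReal := by
        rw [herzNonHomC, herzNonHom_rpow_eq hp.ne' hp']
        gcongr with j
        exact two_rpow_mul_sliceNorm_indicator_pieceN_le hq hq' hr.le hb hsupp hbnorm hf j
    _ ≤ K * ∑' k, (lam k : ℝ≥0∞) ^ p.toReal := hK _
    _ ≤ (K + 1 : ℝ≥0) * ∑' k, (lam k : ℝ≥0∞) ^ p.toReal := by gcongr; exact le_self_add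

/-- block decomposition of the non-homogeneous Herz-slice space
(converse direction). -/
theorem nonHomHerzSlice_block_synthesis
    (n : ℕ) (hn : 1 ≤ n) (α t r : ℝ) (hα : 0 < α) (ht : 0 < t) (hr : 1 < r)
    (p : ℝ≥0∞) (hp : 0 < p) (hp' : p ≠ ∞) (q : ℝ≥0∞) (hq : 1 ≤ q) (hq' : q ≠ ∞) :
    ∃ C : ℝ≥0, 0 < C ∧
      ∀ (lam : ℕ → ℝ≥0) (b : ℕ → En n → ℂ) (f : En n → ℂ),
        (∀ k, Measurable (b k)) →
        (∑' k : ℕ, ((lam k : ℝ≥0∞)) ^ p.toReal < ∞) →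
        (∀ k, Function.support (b k) ⊆ ballZ n (k : ℤ)) →
        (∀ k : ℕ, sliceNormC n t r q (b k) ≤ (2 : ℝ≥0∞) ^ (-(k : ℝ) * α)) →
        (∀ᵐ x ∂(volume : Measure (En n)),
          Summable (fun k : ℕ => (lam k : ℝ) * ‖b k x‖) ∧
          f x = ∑' k : ℕ, ((lam k : ℝ) : ℂ) * b k x) →
        herzNonHomC n t r q α p f ^ p.toReal
          ≤ (C : ℝ≥0∞) * ∑' k : ℕ, ((lam k : ℝ≥0∞)) ^ p.toReal :=
  nonHomHerzSlice_block_synthesis_general n α t r hα hr p hp hp' q hq hq'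
end
end
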